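/- Let d ≥ 1. There exist constants c > 0 and r₀ > 0, depending only on d, such that for every r ∈ (0, r₀), every γ ∈ (0,1], every bounded measurable φ : ℝ^d → ℝ, every measurable g : ℝ^d → ℝ with γ ≤ g(x) ≤ 1 for all x, and every x ∈ ℝ^d, 4 φ(x)³ 𝓛_r φ(x) − 4 φ(x)³ ⟨⟨φ·g⟩⟩(x,r) ≤ 𝓛_r(φ⁴)(x) − 4 (γ − c·r²) φ(x)⁴. -/

import Mathlib

open MeasureTheory Metric

/-- The average of `φ` over the ball of centre `x` and radius `r`. -/
noncomputable def ballAvg (d : ℕ) (φ : EuclideanSpace ℝ (Fin d) → ℝ)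
    (x : EuclideanSpace ℝ (Fin d)) (r : ℝ) : ℝ :=
  (volume (ball (0 : EuclideanSpace ℝ (Fin d)) r)).toReal⁻¹ * ∫ y in ball x r, φ y

/-- The double ball average `⟨⟨φ⟩⟩(x,r)`. -/
noncomputable def dblAvg (d : ℕ) (φ : EuclideanSpace ℝ (Fin d) → ℝ)
    (x : EuclideanSpace ℝ (Fin d)) (r : ℝ) : ℝ :=
  ballAvg d (fun y => ballAvg d φ y r) x r

/-- The operator `𝓛_r φ(x) = ((d+2)/(2r²)) (⟨⟨φ⟩⟩(x,r) − φ(x))`. -/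
noncomputable def opL (d : ℕ) (r : ℝ) (φ : EuclideanSpace ℝ (Fin d) → ℝ)
    (x : EuclideanSpace ℝ (Fin d)) : ℝ :=
  ((d : ℝ) + 2) / (2 * r ^ 2) * (dblAvg d φ x r - φ x)

/-!
Both sides of the inequality are affine in `⟨⟨φ⟩⟩`, `⟨⟨φ⁴⟩⟩` and `⟨⟨φ g⟩⟩`, and `⟨⟨·⟩⟩(x, r)` is
a positive linear functional on locally integrable functions which fixes constants. So it is
enough to prove the inequality with `φ(y)`, `g(y)` in place of the averages, for every `y`.
With `c = 1/(d+2)` and `K = (d+2)/(2r²)` we have `2 K c r² = 1`, and pointwise the inequality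
follows from `t⁴ - a⁴ - 4a³(t - a) ≥ 2a²(t - a)²` and the identity
`2K²a²(t - a)² + 4Ka³s(t - a) + 2a⁴ = 2(Ka(t - a) + a²s)² + 2a⁴(1 - s²)`.
-/

lemma MeasureTheory.LocallyIntegrable.integrableOn_ball {X : Type*} [PseudoMetricSpace X]
    [ProperSpace X] [MeasurableSpace X] {μ : Measure X} {f : X → ℝ}
    (hf : LocallyIntegrable f μ) (y : X) (r : ℝ) : IntegrableOn f (ball y r) μ :=
  (hf.integrableOn_isCompact (isCompact_closedBall y r)).mono_set ball_subset_closedBall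

lemma MeasureTheory.LocallyIntegrable.const_mul {X : Type*} [MeasurableSpace X]
    [TopologicalSpace X] {μ : Measure X} {f : X → ℝ} (hf : LocallyIntegrable f μ) (c : ℝ) :
    LocallyIntegrable (fun x => c * f x) μ :=
  hf.smul c

lemma Measurable.locallyIntegrable_of_abs_le {X : Type*} [MeasurableSpace X]
    [TopologicalSpace X] [OpensMeasurableSpace X] {μ : Measure X} [IsLocallyFiniteMeasure μ]
    {f : X → ℝ} (hf : Measurable f) {C : ℝ} (hC : ∀ x, |f x| ≤ C) : LocallyIntegrable f μ :=
  (memLp_top_of_bound hf.aestronglyMeasurable C (ae_of_all _ hC)).locallyIntegrable le_top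

section BallAverage

variable {d : ℕ} {f g : EuclideanSpace ℝ (Fin d) → ℝ} {r : ℝ}

local notation "E" => EuclideanSpace ℝ (Fin d)

lemma ballAvg_const (hr : 0 < r) (c : ℝ) (y : E) : ballAvg d (fun _ => c) y r = c := by
  have hV : 0 < (volume (ball (0 : E) r)).toReal :=
    ENNReal.toReal_pos (measure_ball_pos volume 0 hr).ne' measure_ball_lt_top.ne
  rw [ballAvg, setIntegral_const, smul_eq_mul, measureReal_def,
    Measure.addHaar_ball_center volume y r]
  field_simp

lemma ballAvg_const_mul (c : ℝ) (y : E) :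
    ballAvg d (fun z => c * f z) y r = c * ballAvg d f y r := by
  rw [ballAvg, ballAvg, integral_const_mul, mul_left_comm]

lemma ballAvg_add {y : E} (hf : IntegrableOn f (ball y r)) (hg : IntegrableOn g (ball y r)) :
    ballAvg d (fun z => f z + g z) y r = ballAvg d f y r + ballAvg d g y r := by
  rw [ballAvg, ballAvg, ballAvg, integral_add hf hg, mul_add]

lemma ballAvg_nonneg (hf : ∀ z, 0 ≤ f z) (y : E) : 0 ≤ ballAvg d f y r :=
  mul_nonneg (inv_nonneg.2 ENNReal.toReal_nonneg)
    (setIntegral_nonneg measurableSet_ball fun z _ => hf z)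

lemma aestronglyMeasurable_ballAvg (hf : AEStronglyMeasurable f volume) :
    AEStronglyMeasurable (fun y => ballAvg d f y r) volume := by
  have hS : MeasurableSet {p : E × E | dist p.2 p.1 < r} :=
    (isOpen_lt (continuous_snd.dist continuous_fst) continuous_const).measurableSet
  have hF : AEStronglyMeasurable ({p : E × E | dist p.2 p.1 < r}.indicator fun p => f p.2)
      (volume.prod volume) :=
    (hf.comp_quasiMeasurePreserving Measure.quasiMeasurePreserving_snd).indicator hS
  have hfun : (fun y => ballAvg d f y r) = fun y => (volume (ball (0 : E) r)).toReal⁻¹ *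
      ∫ z, {p : E × E | dist p.2 p.1 < r}.indicator (fun p => f p.2) (y, z) := by
    funext y
    rw [ballAvg, ← integral_indicator measurableSet_ball]
    rfl
  exact hfun ▸ hF.integral_prod_right'.const_mul _

lemma abs_ballAvg_le_of_mem_ball (hf : LocallyIntegrable f volume) {x y : E} {R : ℝ}
    (hy : y ∈ ball x R) :
    |ballAvg d f y r| ≤
      (volume (ball (0 : E) r)).toReal⁻¹ * ∫ z in closedBall x (R + r), |f z| := by
  have hsub : ball y r ⊆ closedBall x (R + r) := by
    intro z hz
    rw [mem_ball] at hy hz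
    rw [mem_closedBall]
    linarith [dist_triangle z y x]
  rw [ballAvg, abs_mul, abs_of_nonneg (inv_nonneg.2 ENNReal.toReal_nonneg)]
  gcongr
  calc |∫ z in ball y r, f z| ≤ ∫ z in ball y r, |f z| := abs_integral_le_integral_abs
    _ ≤ ∫ z in closedBall x (R + r), |f z| :=
      setIntegral_mono_set (hf.integrableOn_isCompact (isCompact_closedBall x _)).abs
        (ae_of_all _ fun z => abs_nonneg _) (Filter.Eventually.of_forall hsub)

lemma MeasureTheory.LocallyIntegrable.integrableOn_ballAvg (hf : LocallyIntegrable f volume)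
    (x : E) (R : ℝ) : IntegrableOn (fun y => ballAvg d f y r) (ball x R) :=
  Measure.integrableOn_of_bounded measure_ball_lt_top.ne
    (aestronglyMeasurable_ballAvg hf.aestronglyMeasurable)
    ((ae_restrict_iff' measurableSet_ball).2 (ae_of_all _ fun _ hy =>
      (Real.norm_eq_abs _).trans_le (abs_ballAvg_le_of_mem_ball hf hy)))

lemma dblAvg_const (hr : 0 < r) (c : ℝ) (x : E) : dblAvg d (fun _ => c) x r = c := by
  simp only [dblAvg, ballAvg_const hr]

lemma dblAvg_const_mul (c : ℝ) (x : E) :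
    dblAvg d (fun z => c * f z) x r = c * dblAvg d f x r := by
  simp only [dblAvg, ballAvg_const_mul]

lemma dblAvg_add (hf : LocallyIntegrable f volume) (hg : LocallyIntegrable g volume) (x : E) :
    dblAvg d (fun z => f z + g z) x r = dblAvg d f x r + dblAvg d g x r := by
  simp only [dblAvg, ballAvg_add (hf.integrableOn_ball _ r) (hg.integrableOn_ball _ r)]
  exact ballAvg_add (hf.integrableOn_ballAvg x r) (hg.integrableOn_ballAvg x r)

lemma dblAvg_nonneg (hf : ∀ z, 0 ≤ f z) (x : E) : 0 ≤ dblAvg d f x r :=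
  ballAvg_nonneg (fun y => ballAvg_nonneg hf y) x

lemma dblAvg_affine {f₁ f₂ f₃ : E → ℝ} (hf₁ : LocallyIntegrable f₁ volume)
    (hf₂ : LocallyIntegrable f₂ volume) (hf₃ : LocallyIntegrable f₃ volume) (hr : 0 < r)
    (α β δ c : ℝ) (x : E) :
    dblAvg d (fun z => α * f₁ z + β * f₂ z + δ * f₃ z + c) x r =
      α * dblAvg d f₁ x r + β * dblAvg d f₂ x r + δ * dblAvg d f₃ x r + c := by
  rw [dblAvg_add _ (locallyIntegrable_const c), dblAvg_add, dblAvg_add, dblAvg_const_mul,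
    dblAvg_const_mul, dblAvg_const_mul, dblAvg_const hr]
  all_goals (repeat' apply LocallyIntegrable.add) <;> first
    | exact hf₁.const_mul _ | exact hf₂.const_mul _ | exact hf₃.const_mul _

end BallAverage

lemma fourth_power_dissipativity_pointwise {K ε a t s γ : ℝ} (hK : 0 < K)
    (hKε : 1 ≤ 2 * K * ε) (hγs : γ ≤ s) (hs₀ : 0 ≤ s) (hs₁ : s ≤ 1) :
    4 * a ^ 3 * (K * (t - a)) - 4 * a ^ 3 * (t * s) ≤
      K * (t ^ 4 - a ^ 4) - 4 * (γ - ε) * a ^ 4 := by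
  have ha4 : 0 ≤ a ^ 4 := by positivity
  have tangent : 2 * a ^ 2 * (t - a) ^ 2 ≤ t ^ 4 - a ^ 4 - 4 * a ^ 3 * (t - a) := by
    nlinarith [sq_nonneg ((t - a) * (t + a))]
  have square :
      0 ≤ 2 * K ^ 2 * a ^ 2 * (t - a) ^ 2 + 4 * K * a ^ 3 * s * (t - a) + 2 * a ^ 4 := by
    nlinarith [sq_nonneg (K * a * (t - a) + a ^ 2 * s),
      mul_nonneg ha4 (sub_nonneg.2 (mul_le_one₀ hs₁ hs₀ hs₁))]
  have hεa : 2 * a ^ 4 ≤ 4 * K * ε * a ^ 4 := by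
    nlinarith [mul_le_mul_of_nonneg_right hKε ha4]
  have key : 0 ≤ K * (K * (t ^ 4 - a ^ 4) - 4 * (γ - ε) * a ^ 4 -
      (4 * a ^ 3 * (K * (t - a)) - 4 * a ^ 3 * (t * s))) := by
    nlinarith [mul_le_mul_of_nonneg_left tangent (sq_nonneg K),
      mul_nonneg hK.le (mul_nonneg ha4 (sub_nonneg.2 hγs))]
  linarith [nonneg_of_mul_nonneg_right key hK]

theorem fourth_power_dissipativity_general (d : ℕ) :
    ∃ c > (0 : ℝ), ∃ r₀ > (0 : ℝ), ∀ r ∈ Set.Ioo (0 : ℝ) r₀, ∀ γ ∈ Set.Ioc (0 : ℝ) 1,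
      ∀ φ : EuclideanSpace ℝ (Fin d) → ℝ, Measurable φ → (∃ M : ℝ, ∀ x, |φ x| ≤ M) →
      ∀ g : EuclideanSpace ℝ (Fin d) → ℝ, Measurable g → (∀ x, γ ≤ g x ∧ g x ≤ 1) →
      ∀ x : EuclideanSpace ℝ (Fin d),
        4 * φ x ^ 3 * opL d r φ x - 4 * φ x ^ 3 * dblAvg d (fun y => φ y * g y) x r ≤
          opL d r (fun y => φ y ^ 4) x - 4 * (γ - c * r ^ 2) * φ x ^ 4 := by
  refine ⟨1 / ((d : ℝ) + 2), by positivity, 1, one_pos, ?_⟩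
  rintro r ⟨hr, -⟩ γ ⟨hγ, -⟩ φ hφ ⟨M, hM⟩ g hg hgγ x
  set K := ((d : ℝ) + 2) / (2 * r ^ 2)
  set ε := 1 / ((d : ℝ) + 2) * r ^ 2
  set a := φ x
  have hKε : 2 * K * ε = 1 := by simp only [K, ε]; field_simp
  have hg₀ z : 0 ≤ g z := hγ.le.trans (hgγ z).1
  have hφ₁ : LocallyIntegrable φ volume := hφ.locallyIntegrable_of_abs_le hM
  have hφ₄ : LocallyIntegrable (fun z => φ z ^ 4) volume :=
    (hφ.pow_const 4).locallyIntegrable_of_abs_le (C := M ^ 4) fun z => by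
      rw [abs_pow]; exact pow_le_pow_left₀ (abs_nonneg _) (hM z) 4
  have hφg : LocallyIntegrable (fun z => φ z * g z) volume :=
    (hφ.mul hg).locallyIntegrable_of_abs_le (C := M) fun z => by
      rw [Pi.mul_apply, abs_mul, abs_of_nonneg (hg₀ z)]
      exact (mul_le_of_le_one_right (abs_nonneg _) (hgγ z).2).trans (hM z)
  have hpointwise z : 0 ≤ K * φ z ^ 4 + -(4 * K * a ^ 3) * φ z + 4 * a ^ 3 * (φ z * g z) +
      (3 * K * a ^ 4 - 4 * (γ - ε) * a ^ 4) := by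
    linarith [fourth_power_dissipativity_pointwise (a := a) (t := φ z) (by positivity) hKε.ge
      (hgγ z).1 (hg₀ z) (hgγ z).2]
  have hAvg := dblAvg_nonneg hpointwise x (r := r)
  rw [dblAvg_affine hφ₄ hφ₁ hφg hr] at hAvg
  simp only [opL]
  linarith

theorem fourth_power_dissipativity (d : ℕ) (hd : 1 ≤ d) :
    ∃ c > (0 : ℝ), ∃ r₀ > (0 : ℝ), ∀ r ∈ Set.Ioo (0 : ℝ) r₀, ∀ γ ∈ Set.Ioc (0 : ℝ) 1,
      ∀ φ : EuclideanSpace ℝ (Fin d) → ℝ, Measurable φ → (∃ M : ℝ, ∀ x, |φ x| ≤ M) →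
      ∀ g : EuclideanSpace ℝ (Fin d) → ℝ, Measurable g → (∀ x, γ ≤ g x ∧ g x ≤ 1) →
      ∀ x : EuclideanSpace ℝ (Fin d),
        4 * φ x ^ 3 * opL d r φ x - 4 * φ x ^ 3 * dblAvg d (fun y => φ y * g y) x r ≤
          opL d r (fun y => φ y ^ 4) x - 4 * (γ - c * r ^ 2) * φ x ^ 4 :=
  fourth_power_dissipativity_general d
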